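/- Suppose coordinate i satisfies x_{A,i}⋆ = 0, i.e., it is inactive at the minimizer of problem (A). Then x_{B,i}⋆ = 0 as well, both gradients are nonpositive at coordinate i: ∇_i f(x_A⋆) ≤ 0 and ∇_i f(x_B⋆) ≤ 0, and |∇_i f(x_B⋆)| ≤ |∇_i f(x_A⋆)| ≤ αρ√d_i. -/

import Mathlib

open Finset

noncomputable section

/-- Degree of vertex `i` in the (unweighted) graph with adjacency matrix `A`. -/
def deg {n : ℕ} (A : Matrix (Fin n) (Fin n) ℝ) (i : Fin n) : ℝ := ∑ j, A i j

/-- The PageRank matrix `Q = αI + ((1−α)/2)·𝓛 = ((1+α)/2)·I − ((1−α)/2)·D^{-1/2} A D^{-1/2}`. -/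
def Qmat {n : ℕ} (A : Matrix (Fin n) (Fin n) ℝ) (α : ℝ) : Matrix (Fin n) (Fin n) ℝ :=
  fun i j => (if i = j then (1 + α) / 2 else 0)
    - ((1 - α) / 2) * A i j / (Real.sqrt (deg A i) * Real.sqrt (deg A j))

/-- Smooth PageRank objective `f(x) = (1/2)⟨x, Qx⟩ − α⟨D^{-1/2} e_v, x⟩` with seed vertex `v`. -/
def fPR {n : ℕ} (A : Matrix (Fin n) (Fin n) ℝ) (α : ℝ) (v : Fin n) (x : Fin n → ℝ) : ℝ :=
  (1 / 2) * (∑ i, x i * (Qmat A α).mulVec x i) - α * (x v / Real.sqrt (deg A v))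

/-- Gradient of `fPR`: `∇f(x) = Qx − α·D^{-1/2} e_v`. -/
def gradf {n : ℕ} (A : Matrix (Fin n) (Fin n) ℝ) (α : ℝ) (v : Fin n) (x : Fin n → ℝ) :
    Fin n → ℝ :=
  fun i => (Qmat A α).mulVec x i - α * (if i = v then 1 / Real.sqrt (deg A v) else 0)

/-- Weighted ℓ1 norm `‖D^{1/2} x‖₁ = ∑ i, √(d i)·|x i|`. -/
def l1w {n : ℕ} (A : Matrix (Fin n) (Fin n) ℝ) (x : Fin n → ℝ) : ℝ :=
  ∑ i, Real.sqrt (deg A i) * |x i|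

/-- ℓ1-regularized PageRank objective `F_ρ(x) = f(x) + αρ‖D^{1/2}x‖₁`. -/
def Freg {n : ℕ} (A : Matrix (Fin n) (Fin n) ℝ) (α : ℝ) (v : Fin n) (ρ : ℝ)
    (x : Fin n → ℝ) : ℝ :=
  fPR A α v x + α * ρ * l1w A x

/-- Coordinatewise soft-thresholding at levels `t·√(d i)`: this is the proximal map
`prox_{ηg}` of `g(x) = cαρ‖D^{1/2}x‖₁` with `t = η·c·α·ρ`. -/
def softT {n : ℕ} (A : Matrix (Fin n) (Fin n) ℝ) (t : ℝ) (w : Fin n → ℝ) : Fin n → ℝ :=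
  fun i => Real.sign (w i) * max (|w i| - t * Real.sqrt (deg A i)) 0

/-- Euclidean norm on `Fin n → ℝ`. -/
def enorm {n : ℕ} (x : Fin n → ℝ) : ℝ := Real.sqrt (∑ i, (x i) ^ 2)

open Classical in
/-- Degree-weighted volume of a vertex set: `vol(S) = ∑_{i ∈ S} d i`. -/
def volS {n : ℕ} (A : Matrix (Fin n) (Fin n) ℝ) (S : Set (Fin n)) : ℝ :=
  ∑ i ∈ Finset.univ.filter (fun i => i ∈ S), deg A i

/-- Neighbor set of a vertex. -/
def nbr {n : ℕ} (A : Matrix (Fin n) (Fin n) ℝ) (i : Fin n) : Set (Fin n) := {j | A i j ≠ 0}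

/-- Vertex boundary of `S`: vertices outside `S` with a neighbor in `S`. -/
def bdry {n : ℕ} (A : Matrix (Fin n) (Fin n) ℝ) (S : Set (Fin n)) : Set (Fin n) :=
  {j | j ∉ S ∧ ∃ i ∈ S, A j i ≠ 0}

/-- `A` is the adjacency matrix of a finite undirected unweighted loopless graph
with all degrees positive. -/
structure IsGraph {n : ℕ} (A : Matrix (Fin n) (Fin n) ℝ) : Prop where
  symm : ∀ i j, A i j = A j i
  zero_one : ∀ i j, A i j = 0 ∨ A i j = 1
  loopless : ∀ i, A i i = 0
  deg_pos : ∀ i, 0 < deg A i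

/-!
Off the diagonal `Q` is nonpositive, so at a coordinate `i` where `x` vanishes, `(Q x)_i` only
collects the nonpositive contributions `Q i j * x j` of the other coordinates: it is `≤ 0` for
`x ≥ 0` and decreases as `x` grows. Hence `∇_i f(x_B⋆) ≤ 0` and `∇_i f(x_A⋆) ≤ ∇_i f(x_B⋆)`, since
`0 ≤ x_B⋆ ≤ x_A⋆`. The bound `-αρ√d_i ≤ ∇_i f(x_A⋆)` is the one-sided first-order condition of
problem (A) in the direction `+e_i`, where `F_ρ(x_A⋆ + t e_i) - F_ρ(x_A⋆)` equals
`t (∇_i f(x_A⋆) + αρ√d_i) + O(t²)` for `t > 0`.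
-/

open Filter Topology Matrix

theorem Matrix.IsSymm.add_single_dotProduct_mulVec_add_single {ι R : Type*} [Fintype ι]
    [DecidableEq ι] [CommRing R] {Q : Matrix ι ι R} (hQ : Q.IsSymm) (x : ι → R) (i : ι) (t : R) :
    (x + Pi.single i t) ⬝ᵥ Q *ᵥ (x + Pi.single i t)
      = x ⬝ᵥ Q *ᵥ x + 2 * t * (Q *ᵥ x) i + t ^ 2 * Q i i := by
  have hsymm : x ⬝ᵥ Q *ᵥ Pi.single i t = (Q *ᵥ x) i * t := by
    rw [dotProduct_mulVec, ← mulVec_transpose, hQ.eq, dotProduct_single]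
  rw [mulVec_add, dotProduct_add, add_dotProduct, add_dotProduct, hsymm, single_dotProduct,
    single_dotProduct, mulVec_single]
  simp only [Pi.smul_apply, col_apply, op_smul_eq_mul]
  ring

theorem Matrix.mulVec_apply_antitone_of_offDiag_nonpos {ι : Type*} [Fintype ι] {Q : Matrix ι ι ℝ}
    {i : ι} (hQ : ∀ j, j ≠ i → Q i j ≤ 0) {x y : ι → ℝ} (hxy : x ≤ y) (hi : x i = y i) :
    (Q *ᵥ y) i ≤ (Q *ᵥ x) i := by
  rw [← sub_nonpos, ← Pi.sub_apply, ← mulVec_sub]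
  refine Finset.sum_nonpos fun j _ => ?_
  rcases eq_or_ne j i with rfl | hj
  · simp [hi]
  · exact mul_nonpos_of_nonpos_of_nonneg (hQ j hj) (sub_nonneg.2 (hxy j))

theorem nonneg_of_forall_pos_nonneg_mul_add_mul_sq {a b : ℝ}
    (h : ∀ t > 0, 0 ≤ a * t + b * t ^ 2) : 0 ≤ a := by
  have hlim : Tendsto (fun t : ℝ => a + b * t) (𝓝[>] 0) (𝓝 a) :=
    ((continuous_const.add (continuous_const.mul continuous_id)).tendsto' 0 a
      (by simp)).mono_left nhdsWithin_le_nhds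
  refine ge_of_tendsto hlim (eventually_nhdsWithin_of_forall fun t (ht : 0 < t) => ?_)
  have := h t ht
  nlinarith

section PageRank

variable {n : ℕ} {A : Matrix (Fin n) (Fin n) ℝ} {α : ℝ} {v : Fin n}

theorem Qmat_isSymm (hG : IsGraph A) (α : ℝ) : (Qmat A α).IsSymm :=
  IsSymm.ext fun i j => by simp only [Qmat, hG.symm i j, eq_comm, mul_comm]

theorem Qmat_nonpos_of_ne (hG : IsGraph A) (hα1 : α ≤ 1) {i j : Fin n} (hji : j ≠ i) :
    Qmat A α i j ≤ 0 := by
  have hA : 0 ≤ A i j := by rcases hG.zero_one i j with h | h <;> simp [h]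
  have h1α : 0 ≤ 1 - α := by linarith
  simp only [Qmat, if_neg hji.symm, zero_sub, neg_nonpos]
  positivity

theorem gradf_antitone_apply (hG : IsGraph A) (hα1 : α ≤ 1) {x y : Fin n → ℝ} {i : Fin n}
    (hxy : x ≤ y) (hi : x i = y i) : gradf A α v y i ≤ gradf A α v x i :=
  sub_le_sub_right (mulVec_apply_antitone_of_offDiag_nonpos
    (fun _ hj => Qmat_nonpos_of_ne hG hα1 hj) hxy hi) _

theorem gradf_zero_nonpos (hα : 0 ≤ α) (i : Fin n) : gradf A α v 0 i ≤ 0 := by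
  have hseed : 0 ≤ if i = v then 1 / Real.sqrt (deg A v) else 0 := by
    split_ifs <;> positivity
  simpa [gradf] using mul_nonneg hα hseed

theorem fPR_add_single (hG : IsGraph A) (x : Fin n → ℝ) (i : Fin n) (t : ℝ) :
    fPR A α v (x + Pi.single i t)
      = fPR A α v x + t * gradf A α v x i + t ^ 2 / 2 * Qmat A α i i := by
  have hquad := (Qmat_isSymm hG α).add_single_dotProduct_mulVec_add_single x i t
  simp only [dotProduct] at hquad
  have hseed : (x + Pi.single i t : Fin n → ℝ) v = x v + if i = v then t else 0 := by
    simp [Pi.single_apply, eq_comm]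
  rw [fPR, fPR, gradf, hquad, hseed]
  split_ifs <;> ring

theorem l1w_add_single (x : Fin n → ℝ) (i : Fin n) (t : ℝ) :
    l1w A (x + Pi.single i t) = l1w A x + Real.sqrt (deg A i) * (|x i + t| - |x i|) := by
  rw [← sub_eq_iff_eq_add', l1w, l1w, ← Finset.sum_sub_distrib,
    Finset.sum_eq_single i (fun j _ hj => by simp [hj]) (by simp)]
  simp only [Pi.add_apply, Pi.single_eq_same]
  ring

theorem Freg_add_single (hG : IsGraph A) (ρ : ℝ) (x : Fin n → ℝ) (i : Fin n) (t : ℝ) :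
    Freg A α v ρ (x + Pi.single i t)
      = Freg A α v ρ x + t * gradf A α v x i + t ^ 2 / 2 * Qmat A α i i
        + α * ρ * Real.sqrt (deg A i) * (|x i + t| - |x i|) := by
  rw [Freg, Freg, fPR_add_single hG, l1w_add_single]
  ring

theorem neg_le_gradf_of_isMinimizer_of_eq_zero (hG : IsGraph A) {ρ : ℝ} {x : Fin n → ℝ}
    (hx : ∀ z, Freg A α v ρ x ≤ Freg A α v ρ z) {i : Fin n} (hi : x i = 0) :
    -(α * ρ * Real.sqrt (deg A i)) ≤ gradf A α v x i := by
  suffices 0 ≤ gradf A α v x i + α * ρ * Real.sqrt (deg A i) by linarith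
  refine nonneg_of_forall_pos_nonneg_mul_add_mul_sq (b := Qmat A α i i / 2) fun t ht => ?_
  have := hx (x + Pi.single i t)
  rw [Freg_add_single hG, hi, zero_add, abs_zero, sub_zero, abs_of_pos ht] at this
  linarith

end PageRank

theorem inactive_gradient_comparison_general
    {n : ℕ} (A : Matrix (Fin n) (Fin n) ℝ) (hG : IsGraph A)
    (α ρ : ℝ) (hα : 0 < α) (hα1 : α ≤ 1) (v : Fin n)
    (xA xB : Fin n → ℝ)
    (hxA : ∀ z, Freg A α v ρ xA ≤ Freg A α v ρ z)
    -- context facts: minimizers are nonnegative and the solution path is monotone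
    (hAnn : ∀ j, 0 ≤ xA j) (hBnn : ∀ j, 0 ≤ xB j) (hmono : ∀ j, xB j ≤ xA j)
    (i : Fin n) (hiA : xA i = 0) :
    xB i = 0 ∧
    gradf A α v xA i ≤ 0 ∧
    gradf A α v xB i ≤ 0 ∧
    |gradf A α v xB i| ≤ |gradf A α v xA i| ∧
    |gradf A α v xA i| ≤ α * ρ * Real.sqrt (deg A i) := by
  have hiB : xB i = 0 := le_antisymm (hiA ▸ hmono i) (hBnn i)
  have hgA : gradf A α v xA i ≤ 0 :=
    (gradf_antitone_apply hG hα1 hAnn hiA.symm).trans (gradf_zero_nonpos hα.le i)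
  have hgB : gradf A α v xB i ≤ 0 :=
    (gradf_antitone_apply hG hα1 hBnn hiB.symm).trans (gradf_zero_nonpos hα.le i)
  have hAB : gradf A α v xA i ≤ gradf A α v xB i :=
    gradf_antitone_apply hG hα1 hmono (hiB.trans hiA.symm)
  have hlow := neg_le_gradf_of_isMinimizer_of_eq_zero hG hxA hiA
  refine ⟨hiB, hgA, hgB, abs_le_abs_of_nonpos hgB hAB, ?_⟩
  rw [abs_of_nonpos hgA]
  linarith

/-- If coordinate `i` is inactive at the problem-(A) minimizer
(`x_{A,i}⋆ = 0`), then `x_{B,i}⋆ = 0` as well, both gradients are nonpositive at `i`, and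
`|∇_i f(x_B⋆)| ≤ |∇_i f(x_A⋆)| ≤ αρ√d_i`. -/
theorem inactive_gradient_comparison
    {n : ℕ} (A : Matrix (Fin n) (Fin n) ℝ) (hG : IsGraph A)
    (α ρ : ℝ) (hα : 0 < α) (hα1 : α ≤ 1) (hρ : 0 < ρ) (v : Fin n)
    (xA xB : Fin n → ℝ)
    (hxA : ∀ z, Freg A α v ρ xA ≤ Freg A α v ρ z)
    (hxB : ∀ z, Freg A α v (2 * ρ) xB ≤ Freg A α v (2 * ρ) z)
    -- context facts: minimizers are nonnegative and the solution path is monotone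
    (hAnn : ∀ j, 0 ≤ xA j) (hBnn : ∀ j, 0 ≤ xB j) (hmono : ∀ j, xB j ≤ xA j)
    (i : Fin n) (hiA : xA i = 0) :
    xB i = 0 ∧
    gradf A α v xA i ≤ 0 ∧
    gradf A α v xB i ≤ 0 ∧
    |gradf A α v xB i| ≤ |gradf A α v xA i| ∧
    |gradf A α v xA i| ≤ α * ρ * Real.sqrt (deg A i) :=
  inactive_gradient_comparison_general A hG α ρ hα hα1 v xA xB hxA hAnn hBnn hmono i hiA
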